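/- arXiv:2404.08973 — 2 statements merged into one kernel-verified Lean document; each statement's English description precedes it below -/
import Mathlib

section
/- Let θ* ∈ Θ be Pareto optimal for objectives (L_1, L_2), and suppose z_i < L_i(θ) for all θ ∈ Θ and i ∈ {1,2}. Define δ > 0 arbitrarily and set λ_i = (L_i(θ*) - z_i)/δ for i ∈ {1,2}. Then θ* is a minimizer of the weighted Tchebycheff function g(θ) = max_{i∈{1,2}} (L_i(θ) - z_i)/λ_i over Θ, and g(θ*) = δ. -/
/-- Every Pareto optimal point minimizes the Tchebycheff function for a suitable
preference vector, with optimal value δ. -/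
theorem pareto_optimal_minimizes_tchebycheff
    {Θ : Type*} (L₁ L₂ : Θ → ℝ) (z₁ z₂ : ℝ)
    (hz : ∀ θ : Θ, z₁ < L₁ θ ∧ z₂ < L₂ θ)
    (θs : Θ)
    (hpareto : ¬ ∃ θ : Θ,
      (L₁ θ ≤ L₁ θs ∧ L₂ θ ≤ L₂ θs) ∧ (L₁ θ < L₁ θs ∨ L₂ θ < L₂ θs))
    (δ : ℝ) (hδ : 0 < δ)
    (lam₁ lam₂ : ℝ)
    (hlam₁ : lam₁ = (L₁ θs - z₁) / δ) (hlam₂ : lam₂ = (L₂ θs - z₂) / δ) :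
    (∀ θ : Θ,
      max ((L₁ θs - z₁) / lam₁) ((L₂ θs - z₂) / lam₂)
        ≤ max ((L₁ θ - z₁) / lam₁) ((L₂ θ - z₂) / lam₂)) ∧
    max ((L₁ θs - z₁) / lam₁) ((L₂ θs - z₂) / lam₂) = δ := by
  have h1 : z₁ < L₁ θs := (hz θs).1
  have h2 : z₂ < L₂ θs := (hz θs).2
  have hl1 : 0 < lam₁ := by exact hlam₁ ▸ div_pos (sub_pos.mpr h1) hδ
  have hl2 : 0 < lam₂ := by exact hlam₂ ▸ div_pos (sub_pos.mpr h2) hδ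
  have e1 : (L₁ θs - z₁) / lam₁ = δ := by
    rw [hlam₁, div_div_eq_mul_div]; exact mul_div_cancel_left₀ δ (sub_pos.mpr h1).ne'
  have e2 : (L₂ θs - z₂) / lam₂ = δ := by
    rw [hlam₂, div_div_eq_mul_div]; exact mul_div_cancel_left₀ δ (sub_pos.mpr h2).ne'
  have hmax : max ((L₁ θs - z₁) / lam₁) ((L₂ θs - z₂) / lam₂) = δ := by
    rw [e1, e2, max_self]
  refine ⟨fun θ => ?_, hmax⟩
  rw [hmax]
  by_contra h
  push_neg at h
  rw [max_lt_iff] at h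
  obtain ⟨ha, hb⟩ := h
  have c1 : L₁ θ < L₁ θs := by
    have := (div_lt_iff₀ hl1).mp ha
    rw [hlam₁, mul_div_cancel₀ _ hδ.ne'] at this
    linarith
  have c2 : L₂ θ < L₂ θs := by
    have := (div_lt_iff₀ hl2).mp hb
    rw [hlam₂, mul_div_cancel₀ _ hδ.ne'] at this
    linarith
  exact hpareto ⟨θ, ⟨c1.le, c2.le⟩, Or.inl c1⟩
end

section
/- Weak Pareto optimality characterization via Tchebycheff (converse direction): if θ* ∈ Θ is weakly Pareto optimal and z satisfies z_i < L_i(θ) for all θ ∈ Θ and i ∈ {1,2}, then with λ_i = L_i(θ*) - z_i > 0, θ* attains the minimum of g_tch(· | λ) = max_i (L_i(·) - z_i)/λ_i over Θ, and this minimum value equals 1. -/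
/-- Converse direction: a weakly Pareto optimal point minimizes the Tchebycheff
function for the preference vector λᵢ = Lᵢ(θ*) - zᵢ, with optimal value 1. -/
theorem weakly_pareto_optimal_minimizes_tchebycheff
    {Θ : Type*} (L₁ L₂ : Θ → ℝ) (z₁ z₂ : ℝ)
    (hz : ∀ θ : Θ, z₁ < L₁ θ ∧ z₂ < L₂ θ)
    (θs : Θ)
    (hweak : ¬ ∃ θ : Θ, L₁ θ < L₁ θs ∧ L₂ θ < L₂ θs)
    (lam₁ lam₂ : ℝ) (hlam₁ : lam₁ = L₁ θs - z₁) (hlam₂ : lam₂ = L₂ θs - z₂) :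
    (0 < lam₁ ∧ 0 < lam₂) ∧
    (∀ θ : Θ,
      max ((L₁ θs - z₁) / lam₁) ((L₂ θs - z₂) / lam₂)
        ≤ max ((L₁ θ - z₁) / lam₁) ((L₂ θ - z₂) / lam₂)) ∧
    max ((L₁ θs - z₁) / lam₁) ((L₂ θs - z₂) / lam₂) = 1 := by
  have h1 : 0 < lam₁ := by rw [hlam₁]; linarith [(hz θs).1]
  have h2 : 0 < lam₂ := by rw [hlam₂]; linarith [(hz θs).2]
  have hval : max ((L₁ θs - z₁) / lam₁) ((L₂ θs - z₂) / lam₂) = 1 := by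
    rw [hlam₁, hlam₂, div_self (by linarith), div_self (by linarith), max_self]
  refine ⟨⟨h1, h2⟩, fun θ => ?_, hval⟩
  rw [hval]
  by_contra hlt
  push_neg at hlt
  apply hweak
  refine ⟨θ, ?_, ?_⟩
  · have := lt_of_le_of_lt (le_max_left ((L₁ θ - z₁) / lam₁) ((L₂ θ - z₂) / lam₂)) hlt
    rw [div_lt_one h1, hlam₁] at this; linarith
  · have := lt_of_le_of_lt (le_max_right ((L₁ θ - z₁) / lam₁) ((L₂ θ - z₂) / lam₂)) hlt
    rw [div_lt_one h2, hlam₂] at this; linarith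
end
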